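/- Fix X ∈ ℂ with Re X > 0 and X not a real number in the interval (0,1]. Then as n → ∞, g_n(1/2 + 2nX)·exp(−n·Φ(X)) converges to ((X+1)/(X−1))^{1/4} (principal branch), where Φ(X) := X·Log(1 − 1/X²) + Log((X+1)/(X−1)) with Log the principal complex logarithm. -/

import Mathlib

open Complex Finset Filter Topology

/-- `g_n(x) := ∏_{m=1}^n (x+2m-1)/(x-2m)`. -/
noncomputable def gn (n : ℕ) (x : ℂ) : ℂ :=
  ∏ m ∈ Finset.Icc 1 n, (x + 2 * (m : ℂ) - 1) / (x - 2 * (m : ℂ))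

/-- `Φ(X) := X·Log(1 - 1/X²) + Log((X+1)/(X-1))`, with `Log` the principal branch of the
complex logarithm. -/
noncomputable def PhiFun (X : ℂ) : ℂ :=
  X * Complex.log (1 - 1 / X ^ 2) + Complex.log ((X + 1) / (X - 1))

/-!
With `x = 1/2 + 2nX`, the `m`-th factor of `g_n(x)` is `(X + c)/(X - c)` with `c = (m - 1/4)/n`,
so `g_n(x) = exp (∑_{k<n} f ((k + 3/4)/n))` for `f t = Log ((X + t)/(X - t))`: a Riemann sum of
`f` sampling each cell `[k/n, (k+1)/n]` at three quarters of its length. Expanding a primitive `F`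
of `f` to second order around the sample points gives, for any offset `θ ∈ [0, 1]`,
`∑_{k<n} f ((k + θ)/n) = n (F 1 - F 0) + (θ - 1/2) (f 1 - f 0) + O(1/n)`.
Here `F t = X Log (1 - t²/X²) + t f t`, so `F 1 - F 0 = Φ(X)`, and the correction
`(1/4) Log ((X+1)/(X-1))` exponentiates to the principal fourth root. The hypotheses on `X` keep
`(X + t)/(X - t)` and `1 - t²/X²` off the branch cut for `t ∈ [0, 1]`.
-/

section OffsetRiemannSum

variable {E : Type*} [NormedAddCommGroup E] [NormedSpace ℝ E] {F f f' : ℝ → E} {s : Set ℝ}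
  {K : NNReal} {b c : ℝ}

theorem Convex.norm_sub_sub_smul_le_of_lipschitzOnWith (hs : Convex ℝ s)
    (hf : ∀ t ∈ s, HasDerivWithinAt f (f' t) s t) (hf' : LipschitzOnWith K f' s)
    (hb : b ∈ s) (hc : c ∈ s) :
    ‖f b - f c - (b - c) • f' c‖ ≤ K * |b - c| ^ 2 := by
  have hsub : Set.uIcc c b ⊆ s := by rw [← segment_eq_uIcc]; exact hs.segment_subset hc hb
  have hderiv : ∀ t ∈ Set.uIcc c b, HasDerivWithinAt (fun t => f t - (t - c) • f' c)
      (f' t - f' c) (Set.uIcc c b) t := fun t ht => by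
    simpa using ((hf t (hsub ht)).mono hsub).fun_sub
      (((hasDerivAt_id t).sub_const c).smul_const (f' c)).hasDerivWithinAt
  have hbound : ∀ t ∈ Set.uIcc c b, ‖f' t - f' c‖ ≤ K * |b - c| := fun t ht =>
    (hf'.norm_sub_le (hsub ht) hc).trans
      (mul_le_mul_of_nonneg_left (Set.abs_sub_left_of_mem_uIcc ht) K.coe_nonneg)
  have := (convex_uIcc c b).norm_image_sub_le_of_norm_hasDerivWithin_le hderiv hbound
    Set.left_mem_uIcc Set.right_mem_uIcc
  simpa [sq, mul_assoc, sub_right_comm] using this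

theorem Convex.norm_sub_sub_smul_sub_smul_le_of_lipschitzOnWith (hs : Convex ℝ s)
    (hF : ∀ t ∈ s, HasDerivWithinAt F (f t) s t) (hf : ∀ t ∈ s, HasDerivWithinAt f (f' t) s t)
    (hf' : LipschitzOnWith K f' s) (hb : b ∈ s) (hc : c ∈ s) :
    ‖F b - F c - (b - c) • f c - ((b - c) ^ 2 / 2) • f' c‖ ≤ K * |b - c| ^ 3 := by
  have hsub : Set.uIcc c b ⊆ s := by rw [← segment_eq_uIcc]; exact hs.segment_subset hc hb
  have hderiv : ∀ t ∈ Set.uIcc c b, HasDerivWithinAt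
      (fun t => F t - (t - c) • f c - ((t - c) ^ 2 / 2) • f' c)
      (f t - f c - (t - c) • f' c) (Set.uIcc c b) t := fun t ht => by
    have hpoly : HasDerivAt (fun t : ℝ => (t - c) ^ 2 / 2) (t - c) t := by
      simpa using (((hasDerivAt_id' t).sub_const c).fun_pow 2).div_const 2
    simpa using (((hF t (hsub ht)).mono hsub).fun_sub
      (((hasDerivAt_id t).sub_const c).smul_const (f c)).hasDerivWithinAt).fun_sub
      (hpoly.smul_const (f' c)).hasDerivWithinAt
  have hbound : ∀ t ∈ Set.uIcc c b, ‖f t - f c - (t - c) • f' c‖ ≤ K * |b - c| ^ 2 :=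
    fun t ht => (hs.norm_sub_sub_smul_le_of_lipschitzOnWith hf hf' (hsub ht) hc).trans <|
      mul_le_mul_of_nonneg_left
        (pow_le_pow_left₀ (abs_nonneg _) (Set.abs_sub_left_of_mem_uIcc ht) 2) K.coe_nonneg
  have := (convex_uIcc c b).norm_image_sub_le_of_norm_hasDerivWithin_le hderiv hbound
    Set.left_mem_uIcc Set.right_mem_uIcc
  simpa [pow_succ, mul_assoc, sub_right_comm] using this

theorem Convex.norm_smul_sub_sub_smul_sub_le (hs : Convex ℝ s)
    (hF : ∀ t ∈ s, HasDerivWithinAt F (f t) s t) (hf : ∀ t ∈ s, HasDerivWithinAt f (f' t) s t)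
    (hf' : LipschitzOnWith K f' s) {a h θ : ℝ} (ha : a ∈ s) (hah : a + h ∈ s) (hh : 0 ≤ h)
    (hθ : θ ∈ Set.Icc (0 : ℝ) 1) :
    ‖h • f (a + θ * h) - (F (a + h) - F a) - ((θ - 1 / 2) * h) • (f (a + h) - f a)‖
      ≤ 3 * K * h ^ 3 := by
  set c := a + θ * h
  have hc : c ∈ s := by simpa [c, add_sub_cancel_left] using hs.add_smul_mem ha (by simpa) hθ
  have hbc : |a + h - c| ≤ h := by rw [abs_le]; constructor <;> nlinarith [hθ.1, hθ.2]
  have hac : |a - c| ≤ h := by rw [abs_le]; constructor <;> nlinarith [hθ.1, hθ.2]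
  have hhalf : |(θ - 1 / 2) * h| ≤ h / 2 := by
    have : |θ - 1 / 2| ≤ 1 / 2 := abs_le.mpr ⟨by linarith [hθ.1], by linarith [hθ.2]⟩
    rw [abs_mul, abs_of_nonneg hh]; nlinarith
  have hA : ‖F (a + h) - F c - (a + h - c) • f c - ((a + h - c) ^ 2 / 2) • f' c‖ ≤ K * h ^ 3 :=
    (hs.norm_sub_sub_smul_sub_smul_le_of_lipschitzOnWith hF hf hf' hah hc).trans (by gcongr)
  have hB : ‖F a - F c - (a - c) • f c - ((a - c) ^ 2 / 2) • f' c‖ ≤ K * h ^ 3 :=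
    (hs.norm_sub_sub_smul_sub_smul_le_of_lipschitzOnWith hF hf hf' ha hc).trans (by gcongr)
  have hC : ‖f (a + h) - f c - (a + h - c) • f' c‖ ≤ K * h ^ 2 :=
    (hs.norm_sub_sub_smul_le_of_lipschitzOnWith hf hf' hah hc).trans (by gcongr)
  have hD : ‖f a - f c - (a - c) • f' c‖ ≤ K * h ^ 2 :=
    (hs.norm_sub_sub_smul_le_of_lipschitzOnWith hf hf' ha hc).trans (by gcongr)
  -- the first- and second-order terms at `c` cancel since `c` splits `[a, a + h]` as `θ : 1 - θ`
  have key : h • f c - (F (a + h) - F a) - ((θ - 1 / 2) * h) • (f (a + h) - f a) =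
      -((F (a + h) - F c - (a + h - c) • f c - ((a + h - c) ^ 2 / 2) • f' c)
        - (F a - F c - (a - c) • f c - ((a - c) ^ 2 / 2) • f' c))
      - ((θ - 1 / 2) * h) • ((f (a + h) - f c - (a + h - c) • f' c)
        - (f a - f c - (a - c) • f' c)) := by
    simp only [c]; module
  rw [key]
  refine (norm_sub_le _ _).trans ?_
  rw [norm_neg, norm_smul, Real.norm_eq_abs]
  calc _ ≤ (K * h ^ 3 + K * h ^ 3) + h / 2 * (K * h ^ 2 + K * h ^ 2) := by
        gcongr
        · exact (norm_sub_le _ _).trans (add_le_add hA hB)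
        · exact (norm_sub_le _ _).trans (add_le_add hC hD)
    _ = 3 * K * h ^ 3 := by ring

noncomputable def offsetRiemannSum (f : ℝ → E) (θ : ℝ) (n : ℕ) : E :=
  ∑ k ∈ range n, f ((k + θ) / n)

theorem norm_offsetRiemannSum_sub_le
    (hF : ∀ t ∈ Set.Icc (0 : ℝ) 1, HasDerivWithinAt F (f t) (Set.Icc 0 1) t)
    (hf : ∀ t ∈ Set.Icc (0 : ℝ) 1, HasDerivWithinAt f (f' t) (Set.Icc 0 1) t)
    (hf' : LipschitzOnWith K f' (Set.Icc 0 1)) {θ : ℝ} (hθ : θ ∈ Set.Icc (0 : ℝ) 1) {n : ℕ}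
    (hn : n ≠ 0) :
    ‖offsetRiemannSum f θ n - (n : ℝ) • (F 1 - F 0) - (θ - 1 / 2) • (f 1 - f 0)‖ ≤ 3 * K / n := by
  have hn' : (0 : ℝ) < n := by positivity
  set h : ℝ := (n : ℝ)⁻¹
  have hnh : (n : ℝ) * h = 1 := mul_inv_cancel₀ hn'.ne'
  have hmem : ∀ j ≤ n, (j : ℝ) / n ∈ Set.Icc (0 : ℝ) 1 := fun j hj =>
    ⟨by positivity, div_le_one_of_le₀ (by exact_mod_cast hj) hn'.le⟩
  have hcell : ∀ k ∈ range n, ‖h • f ((k + θ) / n) - (F ((k + 1 : ℕ) / n) - F (k / n))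
      - ((θ - 1 / 2) * h) • (f ((k + 1 : ℕ) / n) - f (k / n))‖ ≤ 3 * K * h ^ 3 := by
    intro k hk
    have hk : k < n := mem_range.mp hk
    have hnext : (k : ℝ) / n + h = (k + 1 : ℕ) / n := by push_cast; ring
    have hmid : (k : ℝ) / n + θ * h = (k + θ) / n := by ring
    have := (convex_Icc (0 : ℝ) 1).norm_smul_sub_sub_smul_sub_le hF hf hf' (hmem k hk.le)
      (hnext ▸ hmem (k + 1) hk) (by positivity) hθ
    rwa [hnext, hmid] at this
  have hsum : ∑ k ∈ range n, (h • f ((k + θ) / n) - (F ((k + 1 : ℕ) / n) - F (k / n))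
      - ((θ - 1 / 2) * h) • (f ((k + 1 : ℕ) / n) - f (k / n)))
      = h • offsetRiemannSum f θ n - (F 1 - F 0) - ((θ - 1 / 2) * h) • (f 1 - f 0) := by
    rw [sum_sub_distrib, sum_sub_distrib, ← smul_sum, ← smul_sum,
      sum_range_sub (fun k => F (k / n)), sum_range_sub (fun k => f (k / n))]
    simp [offsetRiemannSum, hn'.ne']
  have hscaled : offsetRiemannSum f θ n - (n : ℝ) • (F 1 - F 0) - (θ - 1 / 2) • (f 1 - f 0)
      = (n : ℝ) • (h • offsetRiemannSum f θ n - (F 1 - F 0)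
        - ((θ - 1 / 2) * h) • (f 1 - f 0)) := by
    linear_combination (norm := module) hnh • ((θ - 1 / 2) • (f 1 - f 0) - offsetRiemannSum f θ n)
  rw [hscaled, ← hsum, norm_smul, Real.norm_of_nonneg hn'.le]
  calc (n : ℝ) * ‖∑ k ∈ range n, _‖ ≤ n * (n * (3 * K * h ^ 3)) := by
        gcongr
        simpa using norm_sum_le_of_le _ hcell
    _ = 3 * K / n := by simp only [h]; field_simp

theorem tendsto_offsetRiemannSum_sub
    (hF : ∀ t ∈ Set.Icc (0 : ℝ) 1, HasDerivWithinAt F (f t) (Set.Icc 0 1) t)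
    (hf : ∀ t ∈ Set.Icc (0 : ℝ) 1, HasDerivWithinAt f (f' t) (Set.Icc 0 1) t)
    (hf' : LipschitzOnWith K f' (Set.Icc 0 1)) {θ : ℝ} (hθ : θ ∈ Set.Icc (0 : ℝ) 1) :
    Tendsto (fun n : ℕ => offsetRiemannSum f θ n - (n : ℝ) • (F 1 - F 0)) atTop
      (𝓝 ((θ - 1 / 2) • (f 1 - f 0))) := by
  rw [tendsto_iff_norm_sub_tendsto_zero]
  refine squeeze_zero' (.of_forall fun _ => norm_nonneg _) ?_
    (tendsto_const_div_atTop_nhds_zero_nat (3 * (K : ℝ)))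
  filter_upwards [eventually_ne_atTop 0] with n hn
    using norm_offsetRiemannSum_sub_le hF hf hf' hθ hn

end OffsetRiemannSum

section LogRatio

variable {X : ℂ} {t : ℝ}

noncomputable def logRatio (X : ℂ) (t : ℝ) : ℂ := log ((X + t) / (X - t))

noncomputable def logRatioPrimitive (X : ℂ) (t : ℝ) : ℂ :=
  X * log (1 - (t : ℂ) ^ 2 / X ^ 2) + t * logRatio X t

theorem sub_ofReal_ne_zero (hX : 0 < X.re) (hXr : ∀ r : ℝ, 0 < r → r ≤ 1 → X ≠ r)
    (ht : t ≤ 1) : X - t ≠ 0 := by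
  intro h
  rw [sub_eq_zero] at h
  subst h
  exact hXr t (by simpa using hX) ht rfl

theorem add_div_sub_mem_slitPlane (hX : 0 < X.re) (hXr : ∀ r : ℝ, 0 < r → r ≤ 1 → X ≠ r)
    (ht : t ∈ Set.Icc (0 : ℝ) 1) : (X + t) / (X - t) ∈ slitPlane := by
  set w := (X + t) / (X - t)
  by_contra hw
  rw [mem_slitPlane_iff, not_or, not_lt, not_not] at hw
  have hXw : X + t = w * (X - t) := (div_mul_cancel₀ _ (sub_ofReal_ne_zero hX hXr ht.2)).symm
  have hre := congrArg re hXw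
  have him := congrArg im hXw
  simp only [add_re, sub_re, mul_re, add_im, sub_im, mul_im, ofReal_re, ofReal_im, hw.2] at hre him
  have hXim : X.im = 0 := by nlinarith
  exact hXr X.re hX (by nlinarith [ht.1, ht.2]) (Complex.ext rfl (by simp [hXim]))

theorem one_sub_sq_div_sq_mem_slitPlane (hX : 0 < X.re)
    (hXr : ∀ r : ℝ, 0 < r → r ≤ 1 → X ≠ r) (ht : t ∈ Set.Icc (0 : ℝ) 1) :
    1 - (t : ℂ) ^ 2 / X ^ 2 ∈ slitPlane := by
  set w := 1 - (t : ℂ) ^ 2 / X ^ 2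
  by_contra hw
  rw [mem_slitPlane_iff, not_or, not_lt, not_not] at hw
  have hX0 : X ≠ 0 := fun h => by simp [h] at hX
  have hXw : (t : ℂ) ^ 2 = (1 - w) * X ^ 2 := by simp only [w]; field_simp; ring
  have hre := congrArg re hXw
  have him := congrArg im hXw
  simp only [sq, sub_re, mul_re, sub_im, mul_im, ofReal_re, ofReal_im, one_re, one_im, hw.2]
    at hre him
  have hXim : X.im = 0 := by
    have : ((1 - w.re) * (2 * X.re)) * X.im = 0 := by linarith
    exact (mul_eq_zero.mp this).resolve_left (by nlinarith [hw.1])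
  have hsq : X.re ^ 2 ≤ 1 := by
    simp only [hXim, mul_zero, sub_zero] at hre
    nlinarith [mul_nonneg (neg_nonneg.mpr hw.1) (sq_nonneg X.re), ht.1, ht.2]
  exact hXr X.re hX (by nlinarith) (Complex.ext rfl (by simp [hXim]))

theorem hasDerivAt_logRatio (hw : (X + t) / (X - t) ∈ slitPlane) :
    HasDerivAt (logRatio X) (2 * X / (X ^ 2 - (t : ℂ) ^ 2)) t := by
  obtain ⟨hadd, hsub⟩ := div_ne_zero_iff.mp (slitPlane_ne_zero hw)
  have hsq : X ^ 2 - (t : ℂ) ^ 2 ≠ 0 := by rw [sq_sub_sq]; exact mul_ne_zero hadd hsub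
  refine ((((hasDerivAt_id' _).const_add X).fun_div ((hasDerivAt_id' _).const_sub X) hsub).clog
    hw).comp_ofReal.congr_deriv ?_
  field_simp
  ring

theorem hasDerivAt_logRatioPrimitive (hX : X ≠ 0) (hw : (X + t) / (X - t) ∈ slitPlane)
    (hu : 1 - (t : ℂ) ^ 2 / X ^ 2 ∈ slitPlane) :
    HasDerivAt (logRatioPrimitive X) (logRatio X t) t := by
  obtain ⟨hadd, hsub⟩ := div_ne_zero_iff.mp (slitPlane_ne_zero hw)
  have hsq : X ^ 2 - (t : ℂ) ^ 2 ≠ 0 := by rw [sq_sub_sq]; exact mul_ne_zero hadd hsub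
  have hu0 := slitPlane_ne_zero hu
  have hquad := (((hasDerivAt_pow 2 (t : ℂ)).div_const (X ^ 2)).const_sub 1).clog hu
  refine ((hquad.comp_ofReal.const_mul X).fun_add
    ((hasDerivAt_id' t).ofReal_comp.fun_mul (hasDerivAt_logRatio hw))).congr_deriv ?_
  push_cast
  field_simp
  ring

theorem exists_lipschitzOnWith_logRatio_deriv
    (hw : ∀ t ∈ Set.Icc (0 : ℝ) 1, (X + t) / (X - t) ∈ slitPlane) :
    ∃ K, LipschitzOnWith K (fun t : ℝ => 2 * X / (X ^ 2 - (t : ℂ) ^ 2)) (Set.Icc 0 1) := by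
  have hden : ∀ t ∈ Set.Icc (0 : ℝ) 1, X ^ 2 - (t : ℂ) ^ 2 ≠ 0 := fun t ht => by
    obtain ⟨hadd, hsub⟩ := div_ne_zero_iff.mp (slitPlane_ne_zero (hw t ht))
    rw [sq_sub_sq]
    exact mul_ne_zero hadd hsub
  refine ContDiffOn.exists_lipschitzOnWith (n := 1) ?_ one_ne_zero (convex_Icc 0 1) isCompact_Icc
  simp_rw [div_eq_mul_inv]
  exact contDiffOn_const.mul <|
    (contDiffOn_const.sub (ofRealCLM.contDiff.contDiffOn.pow 2)).inv hden

theorem logRatio_zero (hX : X ≠ 0) : logRatio X 0 = 0 := by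
  simp [logRatio, hX]

theorem PhiFun_eq_logRatioPrimitive_sub :
    PhiFun X = logRatioPrimitive X 1 - logRatioPrimitive X 0 := by
  simp [PhiFun, logRatioPrimitive, logRatio]

theorem gn_eq_exp_offsetRiemannSum
    (hw : ∀ t ∈ Set.Icc (0 : ℝ) 1, (X + t) / (X - t) ∈ slitPlane) {n : ℕ} (hn : n ≠ 0) :
    gn n (1 / 2 + 2 * n * X) = exp (offsetRiemannSum (logRatio X) (3 / 4) n) := by
  have hn' : (0 : ℝ) < n := by positivity
  rw [offsetRiemannSum, exp_sum, gn, ← Ico_add_one_right_eq_Icc, prod_Ico_eq_prod_range,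
    Nat.add_sub_cancel]
  refine prod_congr rfl fun k hk => ?_
  have hk : (k : ℝ) + 1 ≤ n := by exact_mod_cast mem_range.mp hk
  have hc : ((k : ℝ) + 3 / 4) / n ∈ Set.Icc (0 : ℝ) 1 :=
    ⟨by positivity, by rw [div_le_one hn']; linarith⟩
  rw [logRatio, exp_log (slitPlane_ne_zero (hw _ hc))]
  have hnC : (n : ℂ) ≠ 0 := by exact_mod_cast hn
  have hnum : 1 / 2 + 2 * (n : ℂ) * X + 2 * ((1 + k : ℕ) : ℂ) - 1
      = 2 * n * (X + (((k + 3 / 4) / n : ℝ) : ℂ)) := by push_cast; field_simp; ring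
  have hden : 1 / 2 + 2 * (n : ℂ) * X - 2 * ((1 + k : ℕ) : ℂ)
      = 2 * n * (X - (((k + 3 / 4) / n : ℝ) : ℂ)) := by push_cast; field_simp; ring
  rw [hnum, hden, mul_div_mul_left _ _ (by simpa using hnC)]

end LogRatio

/-- Fix `X ∈ ℂ` with `Re X > 0`, not a real number in `(0,1]`. Then
`g_n(1/2 + 2nX)·exp(-n·Φ(X)) → ((X+1)/(X-1))^(1/4)` (principal branch) as `n → ∞`. -/
theorem stmt_13 (X : ℂ) (hX : 0 < X.re)
    (hXr : ∀ r : ℝ, 0 < r → r ≤ 1 → X ≠ (r : ℂ)) :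
    Tendsto (fun n : ℕ => gn n (1 / 2 + 2 * (n : ℂ) * X) *
        Complex.exp (-(n : ℂ) * PhiFun X)) atTop
      (𝓝 (((X + 1) / (X - 1)) ^ (1 / 4 : ℂ))) := by
  have hX0 : X ≠ 0 := fun h => by simp [h] at hX
  have hw := fun t (ht : t ∈ Set.Icc (0 : ℝ) 1) => add_div_sub_mem_slitPlane hX hXr ht
  obtain ⟨K, hK⟩ := exists_lipschitzOnWith_logRatio_deriv hw
  have hlim := tendsto_offsetRiemannSum_sub (θ := 3 / 4) (F := logRatioPrimitive X)
    (fun t ht => (hasDerivAt_logRatioPrimitive hX0 (hw t ht)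
      (one_sub_sq_div_sq_mem_slitPlane hX hXr ht)).hasDerivWithinAt)
    (fun t ht => (hasDerivAt_logRatio (hw t ht)).hasDerivWithinAt) hK (by norm_num)
  have hval : ((X + 1) / (X - 1)) ^ (1 / 4 : ℂ)
      = exp ((3 / 4 - 1 / 2 : ℝ) • (logRatio X 1 - logRatio X 0)) := by
    have h1 : (X + 1) / (X - 1) ≠ 0 := by simpa using slitPlane_ne_zero (hw 1 (by norm_num))
    rw [cpow_def_of_ne_zero h1, logRatio_zero hX0, logRatio, real_smul]
    push_cast
    ring_nf
  rw [hval]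
  refine ((continuous_exp.tendsto _).comp hlim).congr' ?_
  filter_upwards [eventually_ne_atTop 0] with n hn
  rw [Function.comp_apply, gn_eq_exp_offsetRiemannSum hw hn, ← exp_add,
    PhiFun_eq_logRatioPrimitive_sub, real_smul]
  push_cast
  ring_nf
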